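/- arXiv:2006.12916 — 2 statements merged into one kernel-verified Lean document; each statement's English description precedes it below -/
import Mathlib

section
/- If a rooted graph (X,E) is (m,k)-departing, then every horizontal geodesic in (X,E) has length at most L(m,k) := ⌈(2m+1)/k⌉·k + 2m. In particular, in an (m,1)-departing graph every horizontal geodesic has length at most 4m+1. -/
open SimpleGraph Metric
open scoped ENNReal ENat

noncomputable section

/-- A locally finite connected graph with a distinguished root. -/
structure RootedGraph (X : Type*) where
  G : SimpleGraph X
  root : X
  conn : G.Connected
  locFin : ∀ x : X, {y | G.Adj x y}.Finite

namespace RootedGraph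

variable {X : Type*} (R : RootedGraph X)

/-- The level `|x| = d(ϑ,x)` of a vertex. -/
def level (x : X) : ℕ := R.G.dist R.root x

/-- The horizontal subgraph: edges joining vertices of equal level. -/
def Gh : SimpleGraph X where
  Adj x y := R.G.Adj x y ∧ R.level x = R.level y
  symm := ⟨fun _ _ h => ⟨h.1.symm, h.2.symm⟩⟩
  loopless := ⟨fun x h => R.G.loopless.irrefl x h.1⟩

/-- The horizontal distance `d_h`, valued in `ℕ∞`. -/
def dh (x y : X) : ℕ∞ := R.Gh.edist x y

/-- The `m`-th descendant set `J_m(x)`: vertices `y` with `|y| = |x| + m` lying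
below `x` (i.e. `x` lies on a geodesic from the root to `y`). -/
def J (m : ℕ) (x : X) : Set X :=
  {y | R.level y = R.level x + m ∧ R.G.dist x y = m}

/-- `(m,k)`-departing property. -/
def Departing (m k : ℕ) : Prop :=
  ∀ x y : X, R.level x = R.level y → (k : ℕ∞) < R.dh x y →
    ∀ u ∈ R.J m x, ∀ v ∈ R.J m y, ((2 * k : ℕ) : ℕ∞) < R.dh u v

/-- Expansive property. -/
def Expansive : Prop :=
  ∀ x y : X, R.level x = R.level y → (1 : ℕ∞) < R.dh x y →
    ∀ u ∈ R.J 1 x, ∀ v ∈ R.J 1 y, (1 : ℕ∞) < R.dh u v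

/-- The Gromov product `(x|y)` with base point the root. -/
def gp (x y : X) : ℝ := ((R.level x : ℝ) + R.level y - R.G.dist x y) / 2

/-- Gromov hyperbolicity with respect to the root base point. -/
def Hyperbolic : Prop :=
  ∃ δ : ℝ, 0 ≤ δ ∧ ∀ x y z : X, min (R.gp x z) (R.gp z y) - δ ≤ R.gp x y

/-- A geodesic ray from the root. -/
def IsRay (f : ℕ → X) : Prop := f 0 = R.root ∧ ∀ i, f (i + 1) ∈ R.J 1 (f i)

/-- The Gromov product of two rays: the (increasing) limit of `(x_i|y_i)`. -/
def gpRay (f g : ℕ → X) : ℝ≥0∞ := ⨆ i, ENNReal.ofReal (R.gp (f i) (g i))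

/-- `|x ∨ y|_k = sup{ i : d_h(x_i,y_i) ≤ k }`. -/
def joinK (k : ℕ) (f g : ℕ → X) : ℝ≥0∞ :=
  ⨆ (i : ℕ) (_ : R.dh (f i) (g i) ≤ (k : ℕ∞)), (i : ℝ≥0∞)

/-- The Gromov product on a model `B` of the hyperbolic boundary, defined as the
supremum over pairs of converging rays. -/
def gpB {B : Type*} (lim : (ℕ → X) → B) (ξ η : B) : ℝ≥0∞ :=
  ⨆ (f : ℕ → X) (g : ℕ → X)
    (_ : R.IsRay f ∧ R.IsRay g ∧ lim f = ξ ∧ lim g = η), R.gpRay f g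

/-- `B` together with `lim` is a model of the hyperbolic boundary: every point is the
limit of a ray, and two rays have the same limit iff they are equivalent. -/
def BoundaryOf {B : Type*} (lim : (ℕ → X) → B) : Prop :=
  (∀ ξ : B, ∃ f, R.IsRay f ∧ lim f = ξ) ∧
    ∀ f g, R.IsRay f → R.IsRay g → (lim f = lim g ↔ R.gpRay f g = ⊤)

/-- The metric on the boundary model is a Gromov metric:
`θ_a(ξ,η) ≍ e^{-a(ξ|η)}`. -/
def GromovLike {B : Type*} [MetricSpace B] (lim : (ℕ → X) → B) (a c₁ c₂ : ℝ) : Prop :=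
  ∀ ξ η : B, ξ ≠ η →
    c₁ * Real.exp (-a * (R.gpB lim ξ η).toReal) ≤ dist ξ η ∧
      dist ξ η ≤ c₂ * Real.exp (-a * (R.gpB lim ξ η).toReal)

/-- The boundary cell `J_∂(x)`: boundary points reachable by rays through `x`. -/
def cell {B : Type*} (lim : (ℕ → X) → B) (x : X) : Set B :=
  {ξ | ∃ f, R.IsRay f ∧ f (R.level x) = x ∧ lim f = ξ}

/-- The `k`-shadow `J^k_∂(x)`. -/
def shadow {B : Type*} (lim : (ℕ → X) → B) (k : ℕ) (x : X) : Set B :=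
  ⋃ y ∈ {y | R.level y = R.level x ∧ R.dh x y ≤ (k : ℕ∞)}, R.cell lim y

/-- Bounded degree. -/
def BddDeg : Prop := ∃ D : ℕ, ∀ x : X, Set.ncard {y | R.G.Adj x y} ≤ D

/-- A vertical rooted graph: all edges join adjacent levels. -/
def Vertical : Prop :=
  ∀ x y : X, R.G.Adj x y → R.level x = R.level y + 1 ∨ R.level y = R.level x + 1

/-- An index map on `(X,E_v)` over `M`. -/
def IsIndexMap {M : Type*} [MetricSpace M] (Φ : X → Set M) : Prop :=
  (∀ x, IsCompact (Φ x)) ∧ (∀ x, (Φ x).Nonempty) ∧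
    (∀ x y, y ∈ R.J 1 x → Φ y ⊆ Φ x) ∧
    (∀ f, R.IsRay f → ∃ p, (⋂ i, Φ (f i)) = {p})

/-- The attractor of an index map. -/
def attractor {M : Type*} [MetricSpace M] (Φ : X → Set M) : Set M :=
  ⋂ n : ℕ, ⋃ x ∈ {x | R.level x = n}, Φ x

/-- Exponential type-(b): `diam Φ(x) ≤ δ₀ e^{-b|x|}`. -/
def ExpType {M : Type*} [MetricSpace M] (Φ : X → Set M) (b δ₀ : ℝ) : Prop :=
  ∀ x, EMetric.diam (Φ x) ≤ ENNReal.ofReal (δ₀ * Real.exp (-b * R.level x))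

/-- Condition `(S_b)`. -/
def CondS {M : Type*} [MetricSpace M] (Φ : X → Set M) (b : ℝ) : Prop :=
  ∀ c : ℝ, 0 < c → ∃ ℓ : ℕ, ∀ (n : ℕ) (F : Set M),
    EMetric.diam F < ENNReal.ofReal (c * Real.exp (-b * n)) →
      Set.ncard {x | R.level x = n ∧ ((Φ x ∩ R.attractor Φ) ∩ F).Nonempty} ≤ ℓ

end RootedGraph

/-- Distance between two subsets of a metric space. -/
def setDist {M : Type*} [MetricSpace M] (s t : Set M) : ℝ :=
  sInf ((fun p : M × M => dist p.1 p.2) '' s ×ˢ t)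

/-- The AI_b-graph on `X` associated to an index map `Φ`:
same root, same vertical edges, and horizontal edges between distinct equal-level
vertices whose index sets are `γe^{-bn}`-close. -/
def RootedGraph.IsAIb {X M : Type*} [MetricSpace M] (R R' : RootedGraph X)
    (Φ : X → Set M) (b γ : ℝ) : Prop :=
  R'.root = R.root ∧ ∀ x y : X, R'.G.Adj x y ↔
    (R.G.Adj x y ∨ (R.level x = R.level y ∧ x ≠ y ∧
      setDist (Φ x) (Φ y) ≤ γ * Real.exp (-b * R.level x)))

/-- The AI_∞-graph on `X` associated to an index map `Φ`. -/
def RootedGraph.IsAIinf {X M : Type*} [MetricSpace M] (R R' : RootedGraph X)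
    (Φ : X → Set M) : Prop :=
  R'.root = R.root ∧ ∀ x y : X, R'.G.Adj x y ↔
    (R.G.Adj x y ∨ (R.level x = R.level y ∧ x ≠ y ∧ (Φ x ∩ Φ y).Nonempty))

end

/-!
A vertex of level `n < m` is within `n` of the root, so a horizontal geodesic at such a level
is shorter than `2m`. At a level `≥ m`, split a horizontal path into pieces of horizontal
length `≤ 2k`: by the departing property, ancestors `m` levels up of the endpoints of each
piece are horizontally `k`-close. Hence vertices at horizontal distance `≤ 2qk` are at
distance `≤ qk + 2m`, going up to the ancestors, across, and down. With
`q = (2m + k) / k = ⌈(2m + 1) / k⌉` we have `qk + 2m + 1 ≤ 2qk`, so the initial segment of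
length `qk + 2m + 1` of a longer horizontal geodesic, itself a geodesic, would join vertices at
distance `≤ qk + 2m`.
-/

namespace SimpleGraph

variable {V : Type*} {G : SimpleGraph V}

theorem exists_edist_le_of_edist_le_add {u v : V} {r s : ℕ} (h : G.edist u v ≤ r + s) :
    ∃ w, G.edist u w ≤ r ∧ G.edist w v ≤ s := by
  obtain ⟨p, hp⟩ := exists_walk_of_edist_ne_top (ne_top_of_le_ne_top (by simp) h)
  have hlen : p.length ≤ r + s := by exact_mod_cast hp ▸ h
  refine ⟨p.getVert r, (p.take r).edist_le.trans ?_, (p.drop r).edist_le.trans ?_⟩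
  · exact_mod_cast (p.take_length r).trans_le (min_le_left _ _)
  · rw [Walk.drop_length]
    exact_mod_cast (by omega : p.length - r ≤ s)

end SimpleGraph

namespace RootedGraph

variable {X : Type*} {R : RootedGraph X} {m k : ℕ}

theorem Gh_le : R.Gh ≤ R.G := fun _ _ h => h.1

theorem edist_eq_dist (a b : X) : R.G.edist a b = R.G.dist a b :=
  ((R.conn a b).coe_dist_eq_edist).symm

theorem dist_le_of_dh_le {a b : X} {n : ℕ} (h : R.dh a b ≤ n) : R.G.dist a b ≤ n := by
  have : R.G.edist a b ≤ n := (edist_anti Gh_le).trans h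
  rwa [edist_eq_dist, Nat.cast_le] at this

theorem level_eq_of_dh_ne_top {a b : X} (h : R.dh a b ≠ ⊤) : R.level a = R.level b := by
  replace h := (reachable_iff_reflTransGen a b).mp (reachable_of_edist_ne_top h)
  induction h with
  | refl => rfl
  | tail _ hadj ih => exact ih.trans hadj.2

theorem level_eq_of_dh_le {a b : X} {n : ℕ} (h : R.dh a b ≤ n) : R.level a = R.level b :=
  level_eq_of_dh_ne_top (ne_top_of_le_ne_top (ENat.natCast_ne_top n) h)

theorem exists_mem_J {z : X} (hm : m ≤ R.level z) : ∃ w, z ∈ R.J m w := by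
  have h : R.G.edist R.root z ≤ ((R.level z - m : ℕ) : ℕ∞) + (m : ℕ) := by
    rw [edist_eq_dist, ← Nat.cast_add, Nat.cast_le]
    exact (Nat.sub_add_cancel hm).ge
  obtain ⟨w, hrw, hwz⟩ := exists_edist_le_of_edist_le_add h
  rw [edist_eq_dist, Nat.cast_le] at hrw hwz
  change R.level w ≤ _ at hrw
  have htri : R.level z ≤ R.level w + R.G.dist w z := R.conn.dist_triangle
  exact ⟨w, by omega, by omega⟩

theorem Departing.dh_le_of_mem_J (h : R.Departing m k) {a b x y : X}
    (hab : R.dh a b ≤ (2 * k : ℕ)) (ha : a ∈ R.J m x) (hb : b ∈ R.J m y) :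
    R.dh x y ≤ k := by
  have hlev := level_eq_of_dh_le hab
  by_contra hxy
  exact (h x y (by rw [ha.1, hb.1] at hlev; omega) (not_le.mp hxy) a ha b hb).not_ge hab

theorem Departing.dh_le_mul_of_mem_J (h : R.Departing m k) (j : ℕ) {a b x y : X}
    (hab : R.dh a b ≤ (2 * k * (j + 1) : ℕ)) (ha : a ∈ R.J m x) (hb : b ∈ R.J m y) :
    R.dh x y ≤ (k * (j + 1) : ℕ) := by
  induction j generalizing b y with
  | zero => simpa using h.dh_le_of_mem_J (by simpa using hab) ha hb
  | succ j ih =>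
    have hsplit : R.Gh.edist a b ≤ (2 * k * (j + 1) : ℕ) + (2 * k : ℕ) := by
      rw [← Nat.cast_add]; exact hab.trans_eq (by ring_nf)
    obtain ⟨c, hac, hcb⟩ := exists_edist_le_of_edist_le_add hsplit
    obtain ⟨w, hw⟩ := R.exists_mem_J (z := c) (m := m)
      (by rw [← level_eq_of_dh_le hac, ha.1]; omega)
    calc R.dh x y ≤ R.dh x w + R.dh w y := SimpleGraph.edist_triangle
      _ ≤ (k * (j + 1) : ℕ) + k := add_le_add (ih hac hw) (h.dh_le_of_mem_J hcb hw hb)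
      _ = (k * (j + 1 + 1) : ℕ) := by push_cast; ring

theorem Departing.dist_le_of_dh_le_mul (h : R.Departing m k) (j : ℕ) {a b : X}
    (hab : R.dh a b ≤ (2 * k * j : ℕ)) : R.G.dist a b ≤ 2 * m + k * j := by
  have hlev := level_eq_of_dh_le hab
  have hvia : ∀ c, R.G.dist a b ≤ R.G.dist c a + R.G.dist c b := fun c =>
    R.conn.dist_triangle.trans_eq (by rw [SimpleGraph.dist_comm])
  rcases lt_or_ge (R.level a) m with hlow | hhigh
  · have := hvia R.root
    unfold level at hlow hlev
    omega
  obtain _ | j := j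
  · simp [show a = b by simpa [dh] using hab]
  obtain ⟨x, hx⟩ := R.exists_mem_J hhigh
  obtain ⟨y, hy⟩ := R.exists_mem_J (hlev ▸ hhigh)
  have hxy := dist_le_of_dh_le (h.dh_le_mul_of_mem_J j hab hx hy)
  have hxb : R.G.dist x b ≤ R.G.dist x y + R.G.dist y b := R.conn.dist_triangle
  have := hvia x
  rw [hx.2] at this
  rw [hy.2] at hxb
  omega

theorem exists_dh_le_le_dist_of_dh_eq_dist {x y : X} (hxy : R.dh x y = R.G.dist x y) {n : ℕ}
    (hn : n ≤ R.G.dist x y) : ∃ z, R.dh x z ≤ n ∧ n ≤ R.G.dist x z := by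
  have hsplit : R.Gh.edist x y ≤ (n : ℕ∞) + (R.G.dist x y - n : ℕ) := by
    rw [← Nat.cast_add, Nat.add_sub_cancel' hn]
    exact hxy.le
  obtain ⟨z, hxz, hzy⟩ := exists_edist_le_of_edist_le_add hsplit
  have hzy' := dist_le_of_dh_le hzy
  have htri : R.G.dist x y ≤ R.G.dist x z + R.G.dist z y := R.conn.dist_triangle
  exact ⟨z, hxz, by omega⟩

theorem Departing.dist_le_of_dh_eq_dist (h : R.Departing m k) (hk : 0 < k) {x y : X}
    (hxy : R.dh x y = R.G.dist x y) : R.G.dist x y ≤ (2 * m + k) / k * k + 2 * m := by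
  have hq : 2 * m + 1 ≤ (2 * m + k) / k * k := by
    have := Nat.lt_div_mul_add (a := 2 * m + k) hk
    omega
  set q := (2 * m + k) / k
  by_contra! hlong
  obtain ⟨z, hxz, hlen⟩ := exists_dh_le_le_dist_of_dh_eq_dist hxy hlong
  have hshort := h.dist_le_of_dh_le_mul q (hxz.trans (Nat.cast_le.mpr (by linarith)))
  linarith

end RootedGraph

theorem horizontal_geodesic_bound_general {X : Type*} (R : RootedGraph X) (m k : ℕ)
    (hk : 0 < k) (h : R.Departing m k) :
    (∀ x y : X, R.dh x y = (R.G.dist x y : ℕ∞) →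
      R.dh x y ≤ ((((2 * m + k) / k) * k + 2 * m : ℕ) : ℕ∞)) ∧
    (k = 1 → ∀ x y : X, R.dh x y = (R.G.dist x y : ℕ∞) →
      R.dh x y ≤ ((4 * m + 1 : ℕ) : ℕ∞)) := by
  have hbound : ∀ x y : X, R.dh x y = (R.G.dist x y : ℕ∞) →
      R.dh x y ≤ ((((2 * m + k) / k) * k + 2 * m : ℕ) : ℕ∞) := fun x y hxy => by
    rw [hxy]; exact_mod_cast h.dist_le_of_dh_eq_dist hk hxy
  refine ⟨hbound, ?_⟩
  rintro rfl x y hxy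
  exact (hbound x y hxy).trans_eq (by congr 1; omega)

/-- Proposition 2.10: in an `(m,k)`-departing rooted graph all horizontal
geodesics have length at most `L(m,k) = ⌈(2m+1)/k⌉k + 2m`; in particular at most `4m+1`
when `k = 1`.  (Here `⌈(2m+1)/k⌉ = (2m+k)/k` in natural division.) -/
theorem horizontal_geodesic_bound {X : Type*} (R : RootedGraph X) (m k : ℕ)
    (hm : 0 < m) (hk : 0 < k) (h : R.Departing m k) :
    (∀ x y : X, R.dh x y = (R.G.dist x y : ℕ∞) →
      R.dh x y ≤ ((((2 * m + k) / k) * k + 2 * m : ℕ) : ℕ∞)) ∧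
    (k = 1 → ∀ x y : X, R.dh x y = (R.G.dist x y : ℕ∞) →
      R.dh x y ≤ ((4 * m + 1 : ℕ) : ℕ∞)) :=
  horizontal_geodesic_bound_general R m k hk h
end

section
/- Let (X,E) be an expansive, (m,k)-departing rooted graph with Gromov metric θ_a on its hyperbolic boundary ∂X. Then there exists γ > 0 such that for all x, y ∈ X_n (n ≥ 1) with d_h(x,y) > k, the boundary cells satisfy dist_{θ_a}(J_∂(x), J_∂(y)) > γ e^{−an}. -/
open SimpleGraph Metric
open scoped ENNReal ENat

/-! Call `x'` an ancestor of `x` if it lies on a geodesic from the root to `x`. Expansiveness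
makes ancestors at a common level of horizontally adjacent vertices horizontally adjacent, so
following a geodesic from `f i` to `g i` down to its lowest level `μ` shows
`d(f i, g i) ≥ 2(i - μ) + d_h(f μ, g μ) - 2`. The departing property gives
`d_h(u, v) ≥ 2 d_h(x, y) - 2k` for `m`-th descendants of `k`-separated `x, y`, so the horizontal
distance of two rays separated at level `N` grows exponentially, in particular
`d_h(f μ, g μ) ≥ 2(μ - N) - C`. Together, `(f i | g i) ≤ N + C'` for all `i`. Hence rays with
a common limit stay `k`-close, so all rays converging to points of `J_∂(x)` and `J_∂(y)` are
separated at level `n + (k+1)m`, their Gromov products are at most `n + C''`, and the lower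
bound of the Gromov metric finishes the proof. -/

lemma mul_le_two_pow_add_mul_self (a t : ℕ) : a * t ≤ 2 ^ t + a * a := by
  induction t with
  | zero => simp
  | succ t ih =>
    rcases le_or_gt a t with hat | hta
    · have := Nat.lt_two_pow_self (n := t)
      rw [mul_add_one, pow_succ]
      linarith
    · exact (Nat.mul_le_mul_left a hta).trans le_add_self

namespace RootedGraph

variable {X B : Type*} {R : RootedGraph X} {lim : (ℕ → X) → B} {u v w x y z x' y' z' : X}
  {f g f₀ g₀ : ℕ → X} {m k n N : ℕ}

def IsAncestor (R : RootedGraph X) (x' x : X) : Prop :=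
  R.level x = R.level x' + R.G.dist x' x

lemma level_le_level_add_dist (x y : X) : R.level y ≤ R.level x + R.G.dist x y :=
  R.conn.dist_triangle

lemma level_le_level_add_one_of_adj (h : R.G.Adj x y) : R.level y ≤ R.level x + 1 := by
  simpa [dist_eq_one_iff_adj.2 h] using level_le_level_add_dist (R := R) x y

lemma mem_J_iff {L : ℕ} : y ∈ R.J L x ↔ R.IsAncestor x y ∧ R.level y = R.level x + L := by
  simp only [J, IsAncestor, Set.mem_ofPred_eq]
  omega

lemma mem_J_one_iff : y ∈ R.J 1 x ↔ R.G.Adj x y ∧ R.level y = R.level x + 1 := by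
  simp [J, dist_eq_one_iff_adj, and_comm]

lemma isAncestor_root (x : X) : R.IsAncestor R.root x := by
  simp [IsAncestor, level]

lemma IsAncestor.refl (x : X) : R.IsAncestor x x := by
  simp [IsAncestor]

lemma IsAncestor.trans (h₁ : R.IsAncestor u v) (h₂ : R.IsAncestor v w) : R.IsAncestor u w := by
  have := R.conn.dist_triangle (u := u) (v := v) (w := w)
  have := level_le_level_add_dist (R := R) u w
  unfold IsAncestor at *
  omega

lemma IsAncestor.eq_of_level_eq (h : R.IsAncestor x' x) (hl : R.level x' = R.level x) :
    x' = x := by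
  rw [IsAncestor, hl, left_eq_add, R.conn.dist_eq_zero_iff] at h
  exact h

lemma IsAncestor.exists_between {μ : ℕ} (h : R.IsAncestor x' x)
    (h₁ : R.level x' ≤ μ) (h₂ : μ ≤ R.level x) :
    ∃ w, R.level w = μ ∧ R.IsAncestor x' w ∧ R.IsAncestor w x := by
  obtain ⟨p, hp⟩ := R.conn.exists_walk_length_eq_dist x' x
  refine ⟨p.getVert (μ - R.level x'), ?_⟩
  have hx'w := dist_le (p.take (μ - R.level x'))
  have hwx := dist_le (p.drop (μ - R.level x'))
  have := level_le_level_add_dist (R := R) x' (p.getVert (μ - R.level x'))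
  have := level_le_level_add_dist (R := R) (p.getVert (μ - R.level x')) x
  simp only [Walk.take_length, Walk.drop_length] at hx'w hwx
  unfold IsAncestor at *
  omega

lemma exists_isAncestor {μ : ℕ} (h : μ ≤ R.level x) :
    ∃ x', R.level x' = μ ∧ R.IsAncestor x' x := by
  obtain ⟨w, hw, -, hwx⟩ := (isAncestor_root x).exists_between (by simp [level]) h
  exact ⟨w, hw, hwx⟩

lemma IsAncestor.exists_parent (h : R.IsAncestor x' x) (hl : R.level x' < R.level x) :
    ∃ w, x ∈ R.J 1 w ∧ R.IsAncestor x' w := by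
  obtain ⟨w, hw, hx'w, hwx⟩ := h.exists_between (μ := R.level x - 1) (by omega) (by omega)
  exact ⟨w, mem_J_iff.2 ⟨hwx, by omega⟩, hx'w⟩

lemma level_eq_of_walk_Gh (p : R.Gh.Walk x y) : R.level x = R.level y := by
  induction p with
  | nil => rfl
  | cons h _ ih => exact h.2.trans ih

lemma dh_le_one_of_adj_Gh (h : R.Gh.Adj x y) : R.dh x y ≤ 1 :=
  (edist_eq_one_iff_adj.2 h).le

lemma dh_triangle (x y z : X) : R.dh x z ≤ R.dh x y + R.dh y z :=
  SimpleGraph.edist_triangle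

lemma dh_comm (x y : X) : R.dh x y = R.dh y x :=
  SimpleGraph.edist_comm

lemma Expansive.dh_le_one_of_mem_J_one (hexp : R.Expansive) {px py : X} (hx : x ∈ R.J 1 px)
    (hy : y ∈ R.J 1 py) (hl : R.level x = R.level y) (h : R.dh x y ≤ 1) : R.dh px py ≤ 1 := by
  by_contra! h'
  have hlx := (mem_J_one_iff.1 hx).2
  have hly := (mem_J_one_iff.1 hy).2
  exact (hexp px py (by omega) h' x hx y hy).not_ge h

lemma Expansive.dh_le_one_of_isAncestor (hexp : R.Expansive) (hx : R.IsAncestor x' x)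
    (hy : R.IsAncestor y' y) (hl' : R.level x' = R.level y') (hl : R.level x = R.level y)
    (h : R.dh x y ≤ 1) : R.dh x' y' ≤ 1 := by
  induction hn : R.level x - R.level x' generalizing x y with
  | zero =>
    rw [← hx.eq_of_level_eq (by unfold IsAncestor at hx; omega),
      ← hy.eq_of_level_eq (by unfold IsAncestor at hx hy; omega)] at h
    exact h
  | succ n ih =>
    obtain ⟨px, hpx, hx'⟩ := hx.exists_parent (by omega)
    obtain ⟨py, hpy, hy'⟩ := hy.exists_parent (by omega)
    have hlx := (mem_J_one_iff.1 hpx).2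
    have hly := (mem_J_one_iff.1 hpy).2
    exact ih hx' hy' (by omega) (hexp.dh_le_one_of_mem_J_one hpx hpy hl h) (by omega)

lemma Expansive.dh_le_length_add_one (hexp : R.Expansive) (p : R.Gh.Walk x y)
    (hx : R.IsAncestor x' x) (hy : R.IsAncestor y' y) (hl' : R.level x' = R.level y') :
    R.dh x' y' ≤ p.length + 1 := by
  induction p generalizing x' with
  | nil => simpa using hexp.dh_le_one_of_isAncestor hx hy hl' rfl (by simp [dh])
  | @cons x w y h p ih =>
    obtain ⟨w', hw', hw⟩ := exists_isAncestor (x := w) (μ := R.level x')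
      (by unfold IsAncestor at hx; rw [← h.2]; omega)
    have hxw := hexp.dh_le_one_of_isAncestor hx hw hw'.symm h.2 (dh_le_one_of_adj_Gh h)
    calc R.dh x' y' ≤ R.dh x' w' + R.dh w' y' := dh_triangle _ _ _
      _ ≤ 1 + (p.length + 1) := add_le_add hxw (ih hw hy (hw'.trans hl'))
      _ = (p.cons h).length + 1 := by push_cast [Walk.length_cons]; ring

lemma Expansive.dh_le_dh_add_one (hexp : R.Expansive) (hx : R.IsAncestor x' x)
    (hy : R.IsAncestor y' y) (hl' : R.level x' = R.level y') :
    R.dh x' y' ≤ R.dh x y + 1 := by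
  by_cases htop : R.dh x y = ⊤
  · simp [htop]
  obtain ⟨p, hp⟩ := exists_walk_of_edist_ne_top htop
  rw [show R.dh x y = p.length from hp.symm]
  exact hexp.dh_le_length_add_one p hx hy hl'

lemma IsRay.level_eq (hf : R.IsRay f) (i : ℕ) : R.level (f i) = i := by
  induction i with
  | zero => simp [hf.1, level]
  | succ i ih => rw [(mem_J_one_iff.1 (hf.2 i)).2, ih]

lemma IsRay.isAncestor (hf : R.IsRay f) {i j : ℕ} (h : i ≤ j) :
    R.IsAncestor (f i) (f j) := by
  induction j, h using Nat.le_induction with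
  | base => exact .refl _
  | succ j _ ih => exact ih.trans (mem_J_iff.1 (hf.2 j)).1

lemma IsRay.mem_J (hf : R.IsRay f) (i L : ℕ) : f (i + L) ∈ R.J L (f i) :=
  mem_J_iff.2 ⟨hf.isAncestor (by omega), by rw [hf.level_eq, hf.level_eq]⟩

/-- Following a walk that stays at levels `≥ μ` and tracking one ancestor at level `μ`, a step
up or sideways moves the tracked ancestor by at most one, and a step down costs nothing since
the ancestors of a parent are ancestors of the child. -/
lemma Expansive.exists_isAncestor_dh_add_level_le (hexp : R.Expansive) {μ : ℕ}
    (p : R.G.Walk u z) (hp : ∀ v ∈ p.support, μ ≤ R.level v) (hz' : R.IsAncestor z' z)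
    (hl : R.level z' = μ) :
    ∃ u', R.level u' = μ ∧ R.IsAncestor u' u ∧ R.dh u' z' + R.level u ≤ p.length + R.level z := by
  induction p with
  | nil => exact ⟨z', hl, hz', by simp [dh]⟩
  | @cons u w z h p ih =>
    obtain ⟨w', hlw', hw', hdh⟩ := ih (fun v hv => hp v (by simp [hv])) hz'
    have hμu : μ ≤ R.level u := hp u (by simp)
    have step : ∀ u' (a : ℕ), R.dh u' z' ≤ a + R.dh w' z' → a + R.level u ≤ 1 + R.level w →
        R.dh u' z' + R.level u ≤ (p.cons h).length + R.level z := by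
      intro u' a hu' ha
      calc R.dh u' z' + R.level u ≤ a + R.dh w' z' + R.level u := by gcongr
        _ = R.dh w' z' + ((a + R.level u : ℕ) : ℕ∞) := by push_cast; ring
        _ ≤ R.dh w' z' + ((1 + R.level w : ℕ) : ℕ∞) := by gcongr
        _ = R.dh w' z' + R.level w + 1 := by push_cast; ring
        _ ≤ p.length + R.level z + 1 := by gcongr
        _ = (p.cons h).length + R.level z := by push_cast [Walk.length_cons]; ring
    have := level_le_level_add_one_of_adj h
    have := level_le_level_add_one_of_adj h.symm
    obtain ⟨u', hlu', hu'⟩ := exists_isAncestor hμu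
    rcases (by omega : R.level w = R.level u + 1 ∨ R.level w = R.level u ∨
      R.level u = R.level w + 1) with hup | hhor | hdown
    · have hw : R.IsAncestor u' w := hu'.trans (mem_J_iff.1 (mem_J_one_iff.2 ⟨h, hup⟩)).1
      refine ⟨u', hlu', hu', step u' 1 ?_ (by omega)⟩
      calc R.dh u' z' ≤ R.dh u' w' + R.dh w' z' := dh_triangle _ _ _
        _ ≤ 1 + R.dh w' z' := by
          gcongr
          exact hexp.dh_le_one_of_isAncestor hw hw' (hlu'.trans hlw'.symm) rfl (by simp [dh])
    · refine ⟨u', hlu', hu', step u' 1 ?_ (by omega)⟩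
      calc R.dh u' z' ≤ R.dh u' w' + R.dh w' z' := dh_triangle _ _ _
        _ ≤ 1 + R.dh w' z' := by
          gcongr
          exact hexp.dh_le_one_of_isAncestor hu' hw' (hlu'.trans hlw'.symm) hhor.symm
            (dh_le_one_of_adj_Gh ⟨h, hhor.symm⟩)
    · have hu : R.IsAncestor w' u := hw'.trans (mem_J_iff.1 (mem_J_one_iff.2 ⟨h.symm, hdown⟩)).1
      exact ⟨w', hlw', hu, step w' 0 (by simp) (by omega)⟩

/-- Split a geodesic from `f i` to `g i` at a lowest vertex `z`, at level `μ`, and track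
ancestors at level `μ` along both halves towards `z`. -/
lemma Expansive.exists_dh_ray_add_le_dist (hexp : R.Expansive) (hf : R.IsRay f)
    (hg : R.IsRay g) (i : ℕ) :
    ∃ μ ≤ i, ∃ D : ℕ, R.dh (f μ) (g μ) ≤ D ∧ D + 2 * i ≤ R.G.dist (f i) (g i) + 2 * μ + 2 := by
  classical
  obtain ⟨p, hp⟩ := R.conn.exists_walk_length_eq_dist (f i) (g i)
  obtain ⟨z, hz, hmin⟩ := p.support.toFinset.exists_min_image R.level ⟨f i, by simp⟩
  obtain ⟨q, r, rfl⟩ := Walk.mem_support_iff_exists_append.1 (List.mem_toFinset.1 hz)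
  have hmin' : ∀ v, v ∈ q.support ∨ v ∈ r.support → R.level z ≤ R.level v := fun v hv =>
    hmin v (by simpa [Walk.mem_support_append_iff] using hv)
  set μ := R.level z
  have hμi : μ ≤ i := hf.level_eq i ▸ hmin' (f i) (by simp)
  obtain ⟨u', hu'l, hu', hdu⟩ := hexp.exists_isAncestor_dh_add_level_le q
    (fun v hv => hmin' v (.inl hv)) (.refl z) rfl
  obtain ⟨v', hv'l, hv', hdv⟩ := hexp.exists_isAncestor_dh_add_level_le r.reverse
    (fun v hv => hmin' v (.inr (by simpa using hv))) (.refl z) rfl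
  rw [hf.level_eq] at hdu
  rw [hg.level_eq, Walk.length_reverse] at hdv
  have hfu : R.dh (f μ) u' ≤ 1 := hexp.dh_le_one_of_isAncestor (hf.isAncestor hμi) hu'
    (by rw [hf.level_eq, hu'l]) rfl (by simp [dh])
  have hgv : R.dh v' (g μ) ≤ 1 := hexp.dh_le_one_of_isAncestor hv' (hg.isAncestor hμi)
    (by rw [hg.level_eq, hv'l]) rfl (by simp [dh])
  have htri : R.dh (f μ) (g μ) ≤ R.dh (f μ) u' + R.dh v' (g μ) + (R.dh u' z + R.dh v' z) :=
    calc R.dh (f μ) (g μ) ≤ R.dh (f μ) u' + (R.dh u' z + (R.dh z v' + R.dh v' (g μ))) := by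
          grw [dh_triangle (f μ) u', dh_triangle u' z, dh_triangle z v']
      _ = _ := by rw [dh_comm z v']; ring
  have key : R.dh (f μ) (g μ) + 2 * i ≤ ((R.G.dist (f i) (g i) + 2 * μ + 2 : ℕ) : ℕ∞) :=
    calc R.dh (f μ) (g μ) + 2 * i
        ≤ R.dh (f μ) u' + R.dh v' (g μ) + ((R.dh u' z + i) + (R.dh v' z + i)) := by
          grw [htri]; exact le_of_eq (by ring)
      _ ≤ 1 + 1 + ((q.length + μ) + (r.length + μ)) := by gcongr
      _ = ((R.G.dist (f i) (g i) + 2 * μ + 2 : ℕ) : ℕ∞) := by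
          rw [← hp, Walk.length_append]; push_cast; ring
  obtain ⟨D, hD⟩ := ENat.ne_top_iff_exists.1
    (ne_top_of_le_ne_top (ENat.natCast_ne_top _) (le_self_add.trans key))
  rw [← hD] at key
  exact ⟨μ, hμi, D, hD.ge, by exact_mod_cast key⟩

lemma Departing.dh_le_of_dh_le (hdep : R.Departing m k) (hu : u ∈ R.J m x) (hv : v ∈ R.J m y)
    (hl : R.level u = R.level v) (h : R.dh u v ≤ (2 * k : ℕ)) : R.dh x y ≤ k := by
  by_contra! h'
  have := (mem_J_iff.1 hu).2
  have := (mem_J_iff.1 hv).2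
  exact (hdep x y (by omega) h' u hu v hv).not_ge h

/-- Cutting a horizontal walk into pieces of length `2k`, the ancestors `m` levels up of
consecutive cut points are `k`-close. -/
lemma Departing.two_mul_dh_le_length (hdep : R.Departing m k) (hk : 0 < k)
    (p : R.Gh.Walk u v) (hu : u ∈ R.J m x) (hv : v ∈ R.J m y) :
    2 * R.dh x y ≤ p.length + 2 * k := by
  induction hn : p.length using Nat.strong_induction_on generalizing u x with
  | _ n ih =>
  by_cases hn2k : n ≤ 2 * k
  · have hxy := hdep.dh_le_of_dh_le hu hv (level_eq_of_walk_Gh p)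
      ((edist_le p).trans (by rw [hn]; exact_mod_cast hn2k))
    calc 2 * R.dh x y ≤ 2 * k := by grw [hxy]
      _ ≤ n + 2 * k := le_add_self
  · have hlw : R.level (p.getVert (2 * k)) = R.level u :=
      (level_eq_of_walk_Gh (p.take (2 * k))).symm
    have hlu := (mem_J_iff.1 hu).2
    obtain ⟨w', hlw', hw'⟩ :=
      exists_isAncestor (R := R) (x := p.getVert (2 * k)) (μ := R.level x) (by omega)
    have hw : p.getVert (2 * k) ∈ R.J m w' := mem_J_iff.2 ⟨hw', by omega⟩
    have hxw := hdep.dh_le_of_dh_le hu hw hlw.symm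
      ((edist_le (p.take (2 * k))).trans
        (by rw [Walk.take_length]; exact_mod_cast min_le_left _ _))
    have hwy := ih (n - 2 * k) (by omega) (p.drop (2 * k)) hw (by simp [hn])
    calc 2 * R.dh x y ≤ 2 * R.dh x w' + 2 * R.dh w' y := by
          grw [dh_triangle x w' y, mul_add]
      _ ≤ 2 * k + (((n - 2 * k : ℕ) : ℕ∞) + 2 * k) := by gcongr
      _ = n + 2 * k := by norm_cast; omega

lemma Departing.two_mul_dh_le (hdep : R.Departing m k) (hk : 0 < k) (hu : u ∈ R.J m x)
    (hv : v ∈ R.J m y) : 2 * R.dh x y ≤ R.dh u v + 2 * k := by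
  by_cases htop : R.dh u v = ⊤
  · simp [htop]
  obtain ⟨p, hp⟩ := exists_walk_of_edist_ne_top htop
  rw [show R.dh u v = p.length from hp.symm]
  exact hdep.two_mul_dh_le_length hk p hu hv

lemma Departing.two_mul_add_two_pow_le_dh_ray (hdep : R.Departing m k) (hk : 0 < k)
    (hf : R.IsRay f) (hg : R.IsRay g) (hsep : k < R.dh (f N) (g N))
    (t : ℕ) : ((2 * k + 2 ^ t : ℕ) : ℕ∞) ≤ R.dh (f (N + (t + 1) * m)) (g (N + (t + 1) * m)) := by
  induction t with
  | zero =>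
    have := hdep (f N) (g N) (by rw [hf.level_eq, hg.level_eq]) hsep _ (hf.mem_J N m) _
      (hg.mem_J N m)
    simpa using Order.add_one_le_of_lt this
  | succ t ih =>
    have hsplit := hdep.two_mul_dh_le hk (hf.mem_J (N + (t + 1) * m) m)
      (hg.mem_J (N + (t + 1) * m) m)
    rw [show N + (t + 1 + 1) * m = N + (t + 1) * m + m by ring]
    refine (ENat.add_le_add_iff_right (ENat.natCast_ne_top (2 * k))).1 ?_
    calc (((2 * k + 2 ^ (t + 1) : ℕ) : ℕ∞) + ((2 * k : ℕ) : ℕ∞))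
        = 2 * ((2 * k + 2 ^ t : ℕ) : ℕ∞) := by push_cast; ring
      _ ≤ 2 * R.dh (f (N + (t + 1) * m)) (g (N + (t + 1) * m)) := by gcongr
      _ ≤ _ := by exact_mod_cast hsplit

/-- The horizontal distance of the rays roughly doubles every `m` levels above `N`, and
exponential growth beats `2μ`. -/
lemma two_mul_le_of_dh_ray_le (hexp : R.Expansive) (hdep : R.Departing m k) (hm : 0 < m)
    (hk : 0 < k) (hf : R.IsRay f) (hg : R.IsRay g)
    (hsep : k < R.dh (f N) (g N)) {μ D : ℕ} (hD : R.dh (f μ) (g μ) ≤ D) :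
    2 * μ ≤ D + 2 * N + 4 * m * (m + 1) := by
  by_cases hμ : μ < N + m
  · nlinarith
  obtain ⟨e, rfl⟩ : ∃ e, μ = N + e := ⟨μ - N, by omega⟩
  obtain ⟨t, ht⟩ : ∃ t, e / m = t + 1 := Nat.exists_eq_add_one.2 (Nat.div_pos (by omega) hm)
  have hdiv := Nat.div_add_mod e m
  have hmod := Nat.mod_lt e hm
  rw [ht] at hdiv
  have hle : N + (t + 1) * m ≤ N + e := by rw [← hdiv, mul_comm]; omega
  have hgrow := (hdep.two_mul_add_two_pow_le_dh_ray hk hf hg hsep t).trans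
    ((hexp.dh_le_dh_add_one (hf.isAncestor hle) (hg.isAncestor hle)
      (by rw [hf.level_eq, hg.level_eq])).trans (add_le_add_left hD 1))
  have hpow : 2 * k + 2 ^ t ≤ D + 1 := by exact_mod_cast hgrow
  have := mul_le_two_pow_add_mul_self (2 * m) t
  nlinarith

lemma gp_ray_le (hexp : R.Expansive) (hdep : R.Departing m k) (hm : 0 < m) (hk : 0 < k)
    (hf : R.IsRay f) (hg : R.IsRay g) (hsep : k < R.dh (f N) (g N))
    (i : ℕ) : R.gp (f i) (g i) ≤ N + (2 * m * (m + 1) + 1) := by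
  obtain ⟨μ, -, D, hD, hDi⟩ := hexp.exists_dh_ray_add_le_dist hf hg i
  have := two_mul_le_of_dh_ray_le hexp hdep hm hk hf hg hsep hD
  have hi : (2 * i : ℝ) ≤ R.G.dist (f i) (g i) + 2 * N + 4 * m * (m + 1) + 2 := by
    exact_mod_cast (by omega : 2 * i ≤ R.G.dist (f i) (g i) + 2 * N + 4 * m * (m + 1) + 2)
  rw [gp, hf.level_eq, hg.level_eq]
  linarith

lemma gpRay_le (hexp : R.Expansive) (hdep : R.Departing m k) (hm : 0 < m) (hk : 0 < k)
    (hf : R.IsRay f) (hg : R.IsRay g) (hsep : k < R.dh (f N) (g N)) :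
    R.gpRay f g ≤ ENNReal.ofReal (N + (2 * m * (m + 1) + 1)) :=
  iSup_le fun i => ENNReal.ofReal_le_ofReal (gp_ray_le hexp hdep hm hk hf hg hsep i)

lemma BoundaryOf.dh_ray_le_of_lim_eq (hB : R.BoundaryOf lim) (hexp : R.Expansive)
    (hdep : R.Departing m k) (hm : 0 < m) (hk : 0 < k) (hf : R.IsRay f) (hg : R.IsRay g)
    (hlim : lim f = lim g) (j : ℕ) : R.dh (f j) (g j) ≤ k := by
  by_contra! hsep
  have := gpRay_le hexp hdep hm hk hf hg hsep
  rw [(hB.2 f g hf hg).1 hlim, top_le_iff] at this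
  exact ENNReal.ofReal_ne_top this

/-- At level `n + (k+1)m` the rays `f₀, g₀` are `2k + 2^k > 3k` apart, while rays with equal
limits stay `k`-close. -/
lemma BoundaryOf.lt_dh_of_lim_eq (hB : R.BoundaryOf lim) (hexp : R.Expansive)
    (hdep : R.Departing m k) (hm : 0 < m) (hk : 0 < k) (hf₀ : R.IsRay f₀) (hg₀ : R.IsRay g₀)
    (hf : R.IsRay f) (hg : R.IsRay g) (hsep : k < R.dh (f₀ n) (g₀ n)) (hff₀ : lim f = lim f₀)
    (hgg₀ : lim g = lim g₀) : k < R.dh (f (n + (k + 1) * m)) (g (n + (k + 1) * m)) := by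
  set N := n + (k + 1) * m
  by_contra! hfg
  have h₀ := hdep.two_mul_add_two_pow_le_dh_ray hk hf₀ hg₀ hsep k
  have hfN := hB.dh_ray_le_of_lim_eq hexp hdep hm hk hf₀ hf hff₀.symm N
  have hgN := hB.dh_ray_le_of_lim_eq hexp hdep hm hk hg hg₀ hgg₀ N
  have h3k : R.dh (f₀ N) (g₀ N) ≤ ((3 * k : ℕ) : ℕ∞) :=
    calc R.dh (f₀ N) (g₀ N) ≤ R.dh (f₀ N) (f N) + (R.dh (f N) (g N) + R.dh (g N) (g₀ N)) := by
          grw [dh_triangle (f₀ N) (f N), dh_triangle (f N) (g N)]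
      _ ≤ k + (k + k) := by gcongr
      _ = ((3 * k : ℕ) : ℕ∞) := by push_cast; ring
  have := Nat.lt_two_pow_self (n := k)
  have : 2 * k + 2 ^ k ≤ 3 * k := by exact_mod_cast h₀.trans h3k
  omega

lemma BoundaryOf.gpB_le (hB : R.BoundaryOf lim) (hexp : R.Expansive) (hdep : R.Departing m k)
    (hm : 0 < m) (hk : 0 < k) (hf₀ : R.IsRay f₀) (hg₀ : R.IsRay g₀)
    (hsep : k < R.dh (f₀ n) (g₀ n)) :
    R.gpB lim (lim f₀) (lim g₀) ≤ ENNReal.ofReal (n + ((k + 1) * m + (2 * m * (m + 1) + 1))) :=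
  iSup_le fun f => iSup_le fun g => iSup_le fun ⟨hf, hg, hff₀, hgg₀⟩ => by
    simpa [add_assoc] using gpRay_le hexp hdep hm hk hf hg
      (hB.lt_dh_of_lim_eq hexp hdep hm hk hf₀ hg₀ hf hg hsep hff₀ hgg₀)

lemma BoundaryOf.lim_ne (hB : R.BoundaryOf lim) (hexp : R.Expansive) (hdep : R.Departing m k)
    (hm : 0 < m) (hk : 0 < k) (hf₀ : R.IsRay f₀) (hg₀ : R.IsRay g₀)
    (hsep : k < R.dh (f₀ n) (g₀ n)) : lim f₀ ≠ lim g₀ := fun h => by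
  have := gpRay_le hexp hdep hm hk hf₀ hg₀ hsep
  rw [(hB.2 f₀ g₀ hf₀ hg₀).1 h, top_le_iff] at this
  exact ENNReal.ofReal_ne_top this

end RootedGraph

theorem cells_far_apart_general {X B : Type*} [MetricSpace B] (R : RootedGraph X) (m k : ℕ)
    (hm : 0 < m) (hk : 0 < k) (hexp : R.Expansive) (hdep : R.Departing m k)
    (lim : (ℕ → X) → B) (hB : R.BoundaryOf lim)
    (a c₁ c₂ : ℝ) (ha : 0 < a) (hc₁ : 0 < c₁)
    (hθ : R.GromovLike lim a c₁ c₂) :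
    ∃ γ : ℝ, 0 < γ ∧ ∀ n : ℕ, 1 ≤ n → ∀ x y : X, R.level x = n → R.level y = n →
      (k : ℕ∞) < R.dh x y → ∀ ξ ∈ R.cell lim x, ∀ η ∈ R.cell lim y,
        γ * Real.exp (-a * n) < dist ξ η := by
  set C : ℝ := (k + 1) * m + (2 * m * (m + 1) + 1)
  refine ⟨c₁ * Real.exp (-a * C) / 2, by positivity, ?_⟩
  rintro n - x y rfl hy hxy _ ⟨f₀, hf₀, hf₀x, rfl⟩ _ ⟨g₀, hg₀, hg₀y, rfl⟩
  rw [hy] at hg₀y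
  have hsep : k < R.dh (f₀ (R.level x)) (g₀ (R.level x)) := by rwa [hf₀x, hg₀y]
  have hgpB := ENNReal.toReal_le_of_le_ofReal (by positivity)
    (hB.gpB_le hexp hdep hm hk hf₀ hg₀ hsep)
  calc c₁ * Real.exp (-a * C) / 2 * Real.exp (-a * R.level x)
      < c₁ * Real.exp (-a * C) * Real.exp (-a * R.level x) := by
        gcongr
        exact half_lt_self (by positivity)
    _ = c₁ * Real.exp (-a * (R.level x + C)) := by rw [mul_assoc, ← Real.exp_add]; ring_nf
    _ ≤ c₁ * Real.exp (-a * (R.gpB lim (lim f₀) (lim g₀)).toReal) := by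
        gcongr c₁ * Real.exp ?_
        rw [neg_mul, neg_mul, neg_le_neg_iff]
        exact mul_le_mul_of_nonneg_left hgpB ha.le
    _ ≤ dist (lim f₀) (lim g₀) := (hθ _ _ (hB.lim_ne hexp hdep hm hk hf₀ hg₀ hsep)).1

/-- Proposition 3.2: for an expansive `(m,k)`-departing rooted graph with a
Gromov metric `θ_a` on the hyperbolic boundary, there is `γ > 0` so that cells of vertices
`x,y ∈ X_n` with `d_h(x,y) > k` are at `θ_a`-distance `> γ e^{-an}`. -/
theorem cells_far_apart {X B : Type*} [MetricSpace B] (R : RootedGraph X) (m k : ℕ)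
    (hm : 0 < m) (hk : 0 < k) (hexp : R.Expansive) (hdep : R.Departing m k)
    (hne : ∀ x : X, (R.J 1 x).Nonempty)
    (lim : (ℕ → X) → B) (hB : R.BoundaryOf lim)
    (a c₁ c₂ : ℝ) (ha : 0 < a) (hc₁ : 0 < c₁) (hc₂ : 0 < c₂)
    (hθ : R.GromovLike lim a c₁ c₂) :
    ∃ γ : ℝ, 0 < γ ∧ ∀ n : ℕ, 1 ≤ n → ∀ x y : X, R.level x = n → R.level y = n →
      (k : ℕ∞) < R.dh x y → ∀ ξ ∈ R.cell lim x, ∀ η ∈ R.cell lim y,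
        γ * Real.exp (-a * n) < dist ξ η :=
  cells_far_apart_general R m k hm hk hexp hdep lim hB a c₁ c₂ ha hc₁ hθ
end
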